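/- Let Z ⊂ ℝⁿ be a compact convex set and y ∈ Z \ ∂Z. Then b(y) > 0. Consequently, in the compact finite-dimensional setting, b(y) = 0 if and only if y ∈ ∂Z. -/

import Mathlib

/-!
With `s = t / (1 - t)` the point `(y - t • x) / (1 - t)` is `y + s • (y - x)`, so `weight Z y x > 0`
says that the segment from `x` through `y` extends beyond `y` inside `Z`. If this holds for every
`x ∈ Z`, translate `y` to the origin and restrict to the span of `Z - y`: there the interior is
nonempty, and an interior point can be pushed through the origin, so the origin is interior. A ball
around it, together with the boundedness of `Z`, gives one `σ > 0` with `y + σ • (y - x) ∈ Z` for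
all `x ∈ Z`, and then every weight is at least `σ / (1 + σ)`.
-/

/-- The weight function `t_y(x) = sup{ t ∈ [0,1) : (y - t·x)/(1-t) ∈ Z }`. -/
noncomputable def weight {V : Type*} [AddCommGroup V] [Module ℝ V] (Z : Set V) (y x : V) : ℝ :=
  sSup {t : ℝ | 0 ≤ t ∧ t < 1 ∧ (1 - t)⁻¹ • (y - t • x) ∈ Z}

/-- The boundariness `b(y) = inf_{x ∈ Z} t_y(x)`. -/
noncomputable def bdness {V : Type*} [AddCommGroup V] [Module ℝ V] (Z : Set V) (y : V) : ℝ :=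
  sInf (weight Z y '' Z)

open Set Pointwise

theorem Convex.zero_mem_interior_of_neg_smul_mem {E : Type*} [AddCommGroup E] [Module ℝ E]
    [TopologicalSpace E] [IsTopologicalAddGroup E] [ContinuousConstSMul ℝ E] {C : Set E}
    (hC : Convex ℝ C) {a : E} (ha : a ∈ interior C) {s : ℝ} (hs : 0 < s) (has : -s • a ∈ C) :
    (0 : E) ∈ interior C := by
  have hcombo := hC.combo_interior_self_mem_interior ha has (a := s / (1 + s)) (b := 1 / (1 + s))
    (by positivity) (by positivity) (by field_simp; ring)
  convert hcombo using 1
  match_scalars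
  field_simp
  ring

section FiniteDimensional

variable {E : Type*} [NormedAddCommGroup E] [NormedSpace ℝ E] [FiniteDimensional ℝ E]

theorem Convex.zero_mem_interior_of_span_eq_top {C : Set E} (hC : Convex ℝ C) (h0 : (0 : E) ∈ C)
    (hspan : Submodule.span ℝ C = ⊤) (H : ∀ v ∈ C, ∃ s : ℝ, 0 < s ∧ -s • v ∈ C) :
    (0 : E) ∈ interior C := by
  have haff : affineSpan ℝ C = ⊤ := by
    rw [AffineSubspace.affineSpan_eq_top_iff_vectorSpan_eq_top_of_nonempty ℝ E E ⟨0, h0⟩,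
      vectorSpan_eq_span_vsub_set_right ℝ h0]
    simpa using hspan
  obtain ⟨a, ha⟩ := hC.interior_nonempty_iff_affineSpan_eq_top.2 haff
  obtain ⟨s, hs, has⟩ := H a (interior_subset ha)
  exact hC.zero_mem_interior_of_neg_smul_mem ha hs has

theorem Convex.exists_pos_forall_neg_smul_mem {C : Set E} (hC : Convex ℝ C)
    (hb : Bornology.IsBounded C) (h0 : (0 : E) ∈ C) (H : ∀ v ∈ C, ∃ s : ℝ, 0 < s ∧ -s • v ∈ C) :
    ∃ σ : ℝ, 0 < σ ∧ ∀ v ∈ C, -σ • v ∈ C := by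
  set W := Submodule.span ℝ C
  have hD0 : (0 : W) ∈ interior ((↑) ⁻¹' C : Set W) :=
    (hC.linear_preimage W.subtype).zero_mem_interior_of_span_eq_top h0
      Submodule.span_span_coe_preimage fun v hv ↦ H v hv
  obtain ⟨ε, hε, hball⟩ := Metric.mem_nhds_iff.1 (mem_interior_iff_mem_nhds.1 hD0)
  obtain ⟨R, hR, hCR⟩ := hb.exists_pos_norm_le
  refine ⟨ε / (2 * R), by positivity, fun v hv ↦ ?_⟩
  suffices (-(ε / (2 * R)) • ⟨v, Submodule.subset_span hv⟩ : W) ∈ Metric.ball 0 ε from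
    hball this
  rw [mem_ball_zero_iff, norm_smul, norm_neg, Real.norm_of_nonneg (by positivity)]
  calc ε / (2 * R) * ‖v‖ ≤ ε / (2 * R) * R := by gcongr; exact hCR v hv
    _ < ε := by field_simp; linarith

theorem Convex.exists_pos_forall_add_smul_sub_mem {Z : Set E} (hZ : Convex ℝ Z)
    (hb : Bornology.IsBounded Z) {y : E} (hy : y ∈ Z)
    (H : ∀ x ∈ Z, ∃ s : ℝ, 0 < s ∧ y + s • (y - x) ∈ Z) :
    ∃ σ : ℝ, 0 < σ ∧ ∀ x ∈ Z, y + σ • (y - x) ∈ Z := by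
  have hmem {v : E} : v ∈ -y +ᵥ Z ↔ y + v ∈ Z := by
    rw [mem_vadd_set_iff_neg_vadd_mem, neg_neg, vadd_eq_add]
  obtain ⟨σ, hσ, hσC⟩ := (hZ.vadd (-y)).exists_pos_forall_neg_smul_mem (hb.vadd (-y))
    (hmem.2 (by simpa using hy)) fun v hv ↦ by
      obtain ⟨s, hs, hsv⟩ := H _ (hmem.1 hv)
      exact ⟨s, hs, hmem.2 (by simpa using hsv)⟩
  refine ⟨σ, hσ, fun x hx ↦ ?_⟩
  simpa [← smul_neg] using hmem.1 (hσC (x - y) (hmem.2 (by simpa using hx)))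

end FiniteDimensional

section Weight

variable {V : Type*} [AddCommGroup V] [Module ℝ V] {Z : Set V} {x y : V}

theorem inv_one_sub_smul_sub_smul {t : ℝ} (ht : t ≠ 1) :
    (1 - t)⁻¹ • (y - t • x) = y + (t / (1 - t)) • (y - x) := by
  have : 1 - t ≠ 0 := sub_ne_zero.2 (Ne.symm ht)
  match_scalars
  · field_simp
    ring
  · field_simp

theorem weight_nonneg (Z : Set V) (y x : V) : 0 ≤ weight Z y x :=
  Real.sSup_nonneg fun _ ht ↦ ht.1

theorem exists_add_smul_sub_mem_of_weight_pos (h : 0 < weight Z y x) :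
    ∃ s : ℝ, 0 < s ∧ y + s • (y - x) ∈ Z := by
  have hne : {t : ℝ | 0 ≤ t ∧ t < 1 ∧ (1 - t)⁻¹ • (y - t • x) ∈ Z}.Nonempty := by
    by_contra! hemp
    simp [weight, hemp] at h
  obtain ⟨t, ⟨-, ht1, htZ⟩, ht0⟩ := exists_lt_of_lt_csSup hne h
  refine ⟨t / (1 - t), div_pos ht0 (by linarith), ?_⟩
  rwa [← inv_one_sub_smul_sub_smul ht1.ne]

theorem div_one_add_le_weight {s : ℝ} (hs : 0 ≤ s) (hsZ : y + s • (y - x) ∈ Z) :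
    s / (1 + s) ≤ weight Z y x := by
  refine le_csSup ⟨1, fun t ht ↦ ht.2.1.le⟩
    ⟨by positivity, by rw [div_lt_one (by positivity)]; linarith, ?_⟩
  rw [inv_one_sub_smul_sub_smul (by rw [ne_eq, div_eq_one_iff_eq (by positivity)]; linarith)]
  convert hsZ using 3
  field_simp
  ring

theorem bdness_nonneg (Z : Set V) (y : V) : 0 ≤ bdness Z y :=
  Real.sInf_nonneg <| forall_mem_image.2 fun x _ ↦ weight_nonneg Z y x

theorem bdness_le_weight (hx : x ∈ Z) : bdness Z y ≤ weight Z y x :=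
  csInf_le ⟨0, forall_mem_image.2 fun x _ ↦ weight_nonneg Z y x⟩ (mem_image_of_mem _ hx)

theorem le_bdness {t : ℝ} (hZ : Z.Nonempty) (h : ∀ x ∈ Z, t ≤ weight Z y x) : t ≤ bdness Z y :=
  le_csInf (hZ.image _) (forall_mem_image.2 h)

end Weight

theorem bdness_pos_iff_inner {n : ℕ}
    (Z : Set (EuclideanSpace ℝ (Fin n))) (hconv : Convex ℝ Z) (hcomp : IsCompact Z)
    (y : EuclideanSpace ℝ (Fin n)) (hy : y ∈ Z) :
    ((∀ x ∈ Z, weight Z y x ≠ 0) → 0 < bdness Z y) ∧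
      (bdness Z y = 0 ↔ ∃ x ∈ Z, weight Z y x = 0) := by
  have hpos : (∀ x ∈ Z, weight Z y x ≠ 0) → 0 < bdness Z y := by
    intro hne
    obtain ⟨σ, hσ, hσZ⟩ := hconv.exists_pos_forall_add_smul_sub_mem hcomp.isBounded hy
      fun x hx ↦ exists_add_smul_sub_mem_of_weight_pos ((weight_nonneg Z y x).lt_of_ne' (hne x hx))
    calc 0 < σ / (1 + σ) := by positivity
      _ ≤ bdness Z y := le_bdness ⟨y, hy⟩ fun x hx ↦ div_one_add_le_weight hσ.le (hσZ x hx)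
  refine ⟨hpos, fun h0 ↦ ?_, fun ⟨x, hx, hx0⟩ ↦ ?_⟩
  · by_contra! h
    exact (hpos h).ne' h0
  · exact le_antisymm (hx0 ▸ bdness_le_weight hx) (bdness_nonneg Z y)
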